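/- If n ≥ 2, then |Δ| ≤ m · 2^{2·rg^max}. -/

import Mathlib

/-- Items are `Fin m`; a ranking is a bijection `Fin m ≃ Fin m`
(`rk i` is the rank of item `i`; lower rank = more preferred).
`IsBest rk S b` says that `b` is the item of `I ∖ S` with minimum rank,
i.e. `b = b(a, S)` for an agent with ranking `rk`. -/
def IsBest {m : ℕ} (rk : Fin m ≃ Fin m) (S : Finset (Fin m)) (b : Fin m) : Prop :=
  b ∉ S ∧ ∀ j ∉ S, rk b ≤ rk j

/-- `D rk i` : the set of items strictly preferred to `i` under the ranking `rk`. -/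
def D {m : ℕ} (rk : Fin m ≃ Fin m) (i : Fin m) : Finset (Fin m) :=
  Finset.univ.filter fun j => rk j < rk i

/-- `Δ` : the family of proper subsets `S ⊊ I` with `⋃_{a ≠ a₁} D(a, b(a,S)) = S`. -/
def Delta {A : Type*} {m : ℕ} (a₁ : A) (rk : A → Fin m ≃ Fin m) :
    Set (Finset (Fin m)) :=
  {S | S ⊂ Finset.univ ∧ ∀ b : A → Fin m, (∀ a, IsBest (rk a) S (b a)) →
    {j : Fin m | ∃ a, a ≠ a₁ ∧ j ∈ D (rk a) (b a)} = ↑S}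

/-- The ranks (as natural numbers) given to item `i` by the non-manipulators. -/
def nonManipRanks {A : Type*} [Fintype A] [DecidableEq A] {m : ℕ}
    (a₁ : A) (rk : A → Fin m ≃ Fin m) (i : Fin m) : Finset ℕ :=
  (Finset.univ.filter fun a => a ≠ a₁).image fun a => (rk a i : ℕ)

/-- The range of an item: `max_{a ≠ a₁} rk_a(i) − min_{a ≠ a₁} rk_a(i) + 1`. -/
def rg {A : Type*} [Fintype A] [DecidableEq A] {m : ℕ}
    (a₁ : A) (rk : A → Fin m ≃ Fin m) (i : Fin m) : ℕ :=
  (nonManipRanks a₁ rk i).max.unbotD 0 - (nonManipRanks a₁ rk i).min.untopD 0 + 1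

/-- `rg^max` : the maximum range of an item. -/
def rgMax {A : Type*} [Fintype A] [DecidableEq A] {m : ℕ}
    (a₁ : A) (rk : A → Fin m ≃ Fin m) : ℕ :=
  Finset.univ.sup fun i : Fin m => rg a₁ rk i

/-! Fix a non-manipulator `a₂` and let `R = rg^max`. Any two non-manipulators rank an item within
`R` of each other, so for `S ∈ Δ` and `i = b(a₂, S)`, every `j ∈ S` satisfies
`rk_{a₂}(j) < rk_{a₂}(i) + 2R`. Hence `S` is `D(a₂, i)` together with a subset of the fewer than
`2R` items ranked by `a₂` just after `i`: there are at most `m` choices of `i` and `2^{2R}` of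
the subset. -/

open Finset

theorem exists_isBest {m : ℕ} (σ : Fin m ≃ Fin m) {S : Finset (Fin m)} (hS : S ⊂ univ) :
    ∃ b, IsBest σ S b := by
  obtain ⟨x, -, hx⟩ := exists_of_ssubset hS
  obtain ⟨b, hb, hmin⟩ := exists_min_image Sᶜ σ ⟨x, mem_compl.2 hx⟩
  exact ⟨b, mem_compl.1 hb, fun j hj => hmin j (mem_compl.2 hj)⟩

def window {m : ℕ} (σ : Fin m ≃ Fin m) (i : Fin m) (w : ℕ) : Finset (Fin m) :=
  univ.filter fun j => (σ i : ℕ) < σ j ∧ (σ j : ℕ) < σ i + w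

theorem card_window_le {m : ℕ} (σ : Fin m ≃ Fin m) (i : Fin m) (w : ℕ) :
    #(window σ i w) ≤ w := by
  have hmaps : Set.MapsTo (fun j => (σ j : ℕ)) (window σ i w) (Ioo (σ i : ℕ) (σ i + w)) :=
    fun j hj => by simpa [window] using hj
  have hinj : Set.InjOn (fun j => (σ j : ℕ)) (window σ i w) :=
    fun x _ y _ h => σ.injective (Fin.ext h)
  have := card_le_card_of_injOn _ hmaps hinj
  rw [Nat.card_Ioo] at this
  omega

theorem ncard_le_card_mul_two_pow {ι α : Type*} [Fintype ι] [DecidableEq α]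
    {F : Set (Finset α)} (base W : ι → Finset α) {w : ℕ} (hW : ∀ i, #(W i) ≤ w)
    (hF : ∀ S ∈ F, ∃ i, ∃ T ⊆ W i, S = base i ∪ T) :
    F.ncard ≤ Fintype.card ι * 2 ^ w := by
  set G := univ.biUnion fun i => (W i).powerset.image (base i ∪ ·)
  have hFG : F ⊆ G := fun S hS => by
    obtain ⟨i, T, hT, rfl⟩ := hF S hS
    exact mem_biUnion.2 ⟨i, mem_univ i, mem_image_of_mem _ (mem_powerset.2 hT)⟩
  calc F.ncard ≤ (G : Set (Finset α)).ncard := Set.ncard_le_ncard hFG G.finite_toSet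
    _ = #G := Set.ncard_coe_finset G
    _ ≤ ∑ i, #((W i).powerset.image (base i ∪ ·)) := card_biUnion_le
    _ ≤ ∑ _i : ι, 2 ^ w := sum_le_sum fun i _ => card_image_le.trans <| by
          rw [card_powerset]; exact Nat.pow_le_pow_right two_pos (hW i)
    _ = Fintype.card ι * 2 ^ w := by simp

section Delta

variable {A : Type*} {m : ℕ} {a₁ : A} {rk : A → Fin m ≃ Fin m}

variable (rk) in
theorem rank_lt_rank_add_rg [Fintype A] [DecidableEq A] {a a' : A} (ha : a ≠ a₁)
    (ha' : a' ≠ a₁) (j : Fin m) : (rk a j : ℕ) < rk a' j + rg a₁ rk j := by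
  have mem : ∀ {a}, a ≠ a₁ → (rk a j : ℕ) ∈ nonManipRanks a₁ rk j :=
    fun ha => mem_image_of_mem _ (mem_filter.2 ⟨mem_univ _, ha⟩)
  have hne : (nonManipRanks a₁ rk j).Nonempty := ⟨_, mem ha⟩
  have hmax := le_max' _ _ (mem ha)
  have hmin := min'_le _ _ (mem ha')
  rw [rg, ← coe_max' hne, ← coe_min' hne, WithBot.unbotD_coe, WithTop.untopD_coe]
  omega

variable (a₁ rk) in
theorem rg_le_rgMax [Fintype A] [DecidableEq A] (j : Fin m) : rg a₁ rk j ≤ rgMax a₁ rk :=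
  le_sup (mem_univ j)

theorem exists_mem_D_of_mem_Delta {S : Finset (Fin m)} (hS : S ∈ Delta a₁ rk)
    {b : A → Fin m} (hb : ∀ a, IsBest (rk a) S (b a)) {j : Fin m} (hj : j ∈ S) :
    ∃ a, a ≠ a₁ ∧ j ∈ D (rk a) (b a) :=
  (Set.ext_iff.1 (hS.2 b hb) j).2 hj

theorem rank_lt_of_mem_Delta [Fintype A] [DecidableEq A] {S : Finset (Fin m)}
    (hS : S ∈ Delta a₁ rk) {a₂ : A} (ha₂ : a₂ ≠ a₁) {i j : Fin m} (hi : i ∉ S) (hj : j ∈ S) :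
    (rk a₂ j : ℕ) < rk a₂ i + 2 * rgMax a₁ rk := by
  choose b hb using fun a => exists_isBest (rk a) hS.1
  obtain ⟨a, ha, hja⟩ := exists_mem_D_of_mem_Delta hS hb hj
  have hjb : (rk a j : ℕ) < rk a (b a) := by simpa [D] using hja
  have hbi : (rk a (b a) : ℕ) ≤ rk a i := (hb a).2 i hi
  have hj₂ := rank_lt_rank_add_rg rk ha₂ ha j
  have hi₂ := rank_lt_rank_add_rg rk ha ha₂ i
  have hrgi := rg_le_rgMax a₁ rk i
  have hrgj := rg_le_rgMax a₁ rk j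
  omega

theorem exists_D_subset_of_mem_Delta {S : Finset (Fin m)} (hS : S ∈ Delta a₁ rk) {a₂ : A}
    (ha₂ : a₂ ≠ a₁) : ∃ i ∉ S, D (rk a₂) i ⊆ S := by
  choose b hb using fun a => exists_isBest (rk a) hS.1
  exact ⟨b a₂, (hb a₂).1, fun j hj => (Set.ext_iff.1 (hS.2 b hb) j).1 ⟨a₂, ha₂, hj⟩⟩

theorem exists_eq_D_union_of_mem_Delta [Fintype A] [DecidableEq A] {S : Finset (Fin m)}
    (hS : S ∈ Delta a₁ rk) {a₂ : A} (ha₂ : a₂ ≠ a₁) :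
    ∃ i, ∃ T ⊆ window (rk a₂) i (2 * rgMax a₁ rk), S = D (rk a₂) i ∪ T := by
  obtain ⟨i, hi, hD⟩ := exists_D_subset_of_mem_Delta hS ha₂
  refine ⟨i, S \ D (rk a₂) i, fun j hj => ?_, (union_sdiff_of_subset hD).symm⟩
  obtain ⟨hjS, hjD⟩ := mem_sdiff.1 hj
  have hji : (rk a₂ j : ℕ) ≠ rk a₂ i := fun h => hi ((rk a₂).injective (Fin.ext h) ▸ hjS)
  have hij : (rk a₂ i : ℕ) ≤ rk a₂ j := by simpa [D] using hjD
  simp only [window, mem_filter, mem_univ, true_and]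
  exact ⟨by omega, rank_lt_of_mem_Delta hS ha₂ hi hjS⟩

end Delta

/-- if `n ≥ 2`, then `|Δ| ≤ m * 2 ^ (2 * rg^max)`. -/
theorem statement10 {A : Type*} [Fintype A] [DecidableEq A] {m : ℕ}
    (a₁ : A) (rk : A → Fin m ≃ Fin m) (hn : 2 ≤ Fintype.card A) :
    (Delta a₁ rk).ncard ≤ m * 2 ^ (2 * rgMax a₁ rk) := by
  obtain ⟨a₂, ha₂⟩ := Fintype.exists_ne_of_one_lt_card hn a₁
  simpa using ncard_le_card_mul_two_pow (fun i => D (rk a₂) i)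
    (fun i => window (rk a₂) i (2 * rgMax a₁ rk)) (fun i => card_window_le _ _ _)
    (fun S hS => exists_eq_D_union_of_mem_Delta hS ha₂)
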